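/- Let m ≥ 2, n ≥ 1, let A be a real m×m matrix with a_{ij} ≥ 0 for i ≠ j, zero row sums, and irreducible; let ε > 0, and let ξ ∈ ℝᵐ satisfy ξ_i > 0 for all i and ξᵀA = 0. Suppose f : ℝⁿ × [0,∞) → ℝⁿ satisfies condition (11) with positive diagonal matrices P = diag(p₁,…,p_n), Δ = diag(Δ₁,…,Δ_n) and constant η > 0. Let α > 0, let s : [0,∞) → ℝⁿ satisfy s'(t) = f(s(t),t), and let x₁,…,x_m : [0,∞) → ℝⁿ and c : [0,∞) → ℝ with c(0) ≥ 0 satisfy the adaptive controlled network: x₁'(t) = f(x₁(t),t) + c(t)·Σ_{j=1}^m a_{1j} x_j(t) − c(t)ε(x₁(t) − s(t)), x_i'(t) = f(x_i(t),t) + c(t)·Σ_{j=1}^m a_{ij} x_j(t) for i = 2,…,m, and c'(t) = (α/2)·Σ_{i=1}^m (x_i(t) − s(t))ᵀ P (x_i(t) − s(t)). Then ‖x_i(t) − s(t)‖ → 0 as t → ∞ for every i = 1,…,m, and c(t) converges to a finite limit c₀ ≥ 0 as t → ∞. -/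

import Mathlib

/-!
With `e i = x i - s` and `W = ∑ i, e iᵀ P e i`, the function
`V = ∑ i, ξ i * e iᵀ P e i + (2 λ / α) (c - c*)²` is a Lyapunov function. Coordinatewise, coupling
and pinning contribute a quadratic form that is negative definite, `≤ -λ ‖v‖²`, because `ξ` is a
positive left null vector of the irreducible `A` and node `i₀` is pinned. Condition (11) bounds the
drift by a multiple of `W` and the adaptive law contributes `2 λ (c - c*) W`, so for large `c*`
we get `V' ≤ -W`. Hence `c` increases and stays bounded, so it converges, and so does
`∑ i, ξ i * e iᵀ P e i`; its limit is `0`, since otherwise `V` would decrease at a fixed positive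
rate forever.
-/

open Matrix Filter Topology Set

theorem exists_le_neg_mul_norm_sq {E : Type*} [NormedAddCommGroup E] [NormedSpace ℝ E]
    [ProperSpace E] [Nontrivial E] {Q : E → ℝ} (hQ : Continuous Q)
    (hsmul : ∀ (a : ℝ) v, Q (a • v) = a ^ 2 * Q v) (hneg : ∀ v ≠ 0, Q v < 0) :
    ∃ lam > 0, ∀ v, Q v ≤ -lam * ‖v‖ ^ 2 := by
  obtain ⟨v₀, hv₀, hmax⟩ := (isCompact_sphere (0 : E) 1).exists_isMaxOn
    (NormedSpace.sphere_nonempty.2 zero_le_one) hQ.continuousOn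
  have hv₀ : ‖v₀‖ = 1 := by simpa using hv₀
  refine ⟨-Q v₀, neg_pos.2 (hneg v₀ (norm_ne_zero_iff.1 (by simp [hv₀]))), fun v => ?_⟩
  rcases eq_or_ne v 0 with rfl | hv
  · have hQ0 : Q 0 = 0 := by simpa using hsmul 0 0
    simp [hQ0]
  have hu : ‖v‖⁻¹ • v ∈ Metric.sphere (0 : E) 1 := by
    simp [norm_smul, hv]
  calc Q v = ‖v‖ ^ 2 * Q (‖v‖⁻¹ • v) := by
        rw [← hsmul, smul_smul, mul_inv_cancel₀ (norm_ne_zero_iff.2 hv), one_smul]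
    _ ≤ ‖v‖ ^ 2 * Q v₀ := mul_le_mul_of_nonneg_left (hmax hu) (by positivity)
    _ = -(-Q v₀) * ‖v‖ ^ 2 := by ring

section PinnedForm

variable {ι : Type*} [Fintype ι] {A : Matrix ι ι ℝ} {ξ : ι → ℝ}

theorem sum_mul_mul_mulVec_eq (hrow : ∀ i, ∑ j, A i j = 0) (hleft : ξ ᵥ* A = 0) (v : ι → ℝ) :
    ∑ i, ξ i * v i * (A *ᵥ v) i = -(1 / 2) * ∑ i, ∑ j, ξ i * A i j * (v i - v j) ^ 2 := by
  have hcol : ∀ j, ∑ i, ξ i * A i j = 0 := fun j => congrFun hleft j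
  have hdiag : ∑ i, ∑ j, ξ i * A i j * v i ^ 2 = 0 :=
    Finset.sum_eq_zero fun i _ => by
      rw [← Finset.sum_mul, ← Finset.mul_sum, hrow, mul_zero, zero_mul]
  have hdiag' : ∑ i, ∑ j, ξ i * A i j * v j ^ 2 = 0 := by
    rw [Finset.sum_comm]
    exact Finset.sum_eq_zero fun j _ => by rw [← Finset.sum_mul, hcol, zero_mul]
  have hcross : ∑ i, ξ i * v i * (A *ᵥ v) i = ∑ i, ∑ j, ξ i * A i j * (v i * v j) := by
    simp only [mulVec, dotProduct, Finset.mul_sum]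
    exact Finset.sum_congr rfl fun i _ => Finset.sum_congr rfl fun j _ => by ring
  have hexpand : ∑ i, ∑ j, ξ i * A i j * (v i - v j) ^ 2 = ∑ i, ∑ j, ξ i * A i j * v i ^ 2
      - 2 * ∑ i, ∑ j, ξ i * A i j * (v i * v j) + ∑ i, ∑ j, ξ i * A i j * v j ^ 2 := by
    simp only [Finset.mul_sum, ← Finset.sum_sub_distrib, ← Finset.sum_add_distrib]
    exact Finset.sum_congr rfl fun i _ => Finset.sum_congr rfl fun j _ => by ring
  rw [hcross, hexpand, hdiag, hdiag']
  ring

/-- Along each coordinate of the errors, the contribution of coupling and pinning to the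
derivative of `∑ i, ξ i * e iᵀ P e i`. -/
def pinnedForm (A : Matrix ι ι ℝ) (ξ : ι → ℝ) (ε : ℝ) (i₀ : ι) (v : ι → ℝ) : ℝ :=
  ∑ i, ξ i * v i * (A *ᵥ v) i - ε * ξ i₀ * v i₀ ^ 2

theorem pinnedForm_smul (ε : ℝ) (i₀ : ι) (a : ℝ) (v : ι → ℝ) :
    pinnedForm A ξ ε i₀ (a • v) = a ^ 2 * pinnedForm A ξ ε i₀ v := by
  simp only [pinnedForm, mulVec_smul, Pi.smul_apply, smul_eq_mul, mul_sub, Finset.mul_sum]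
  congr 1
  · exact Finset.sum_congr rfl fun i _ => by ring
  · ring

theorem continuous_pinnedForm (ε : ℝ) (i₀ : ι) : Continuous (pinnedForm A ξ ε i₀) := by
  unfold pinnedForm
  fun_prop

/-- If the form vanished, every edge term and the pinning term would vanish: `v` would be constant
along the edges of `A`, hence constant by irreducibility, and zero at `i₀`. -/
theorem pinnedForm_neg (hoff : ∀ i j, i ≠ j → 0 ≤ A i j) (hrow : ∀ i, ∑ j, A i j = 0)
    (hirr : ∀ i j, i ≠ j → Relation.TransGen (fun p q => A p q ≠ 0) i j)
    {ε : ℝ} (hε : 0 < ε) (hξ : ∀ i, 0 < ξ i) (hleft : ξ ᵥ* A = 0) (i₀ : ι)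
    {v : ι → ℝ} (hv : v ≠ 0) : pinnedForm A ξ ε i₀ v < 0 := by
  have hterm : ∀ i j, 0 ≤ ξ i * A i j * (v i - v j) ^ 2 := by
    intro i j
    rcases eq_or_ne i j with rfl | hij
    · simp
    · exact mul_nonneg (mul_nonneg (hξ i).le (hoff i j hij)) (sq_nonneg _)
  have hsum : 0 ≤ ∑ i, ∑ j, ξ i * A i j * (v i - v j) ^ 2 :=
    Finset.sum_nonneg fun i _ => Finset.sum_nonneg fun j _ => hterm i j
  have hpin : 0 ≤ ε * ξ i₀ * v i₀ ^ 2 := by have := hξ i₀; positivity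
  rw [pinnedForm, sum_mul_mul_mulVec_eq hrow hleft]
  by_contra! h
  have hv₀ : v i₀ = 0 := by
    have : ε * ξ i₀ * v i₀ ^ 2 = 0 := by linarith
    simpa [hε.ne', (hξ i₀).ne'] using this
  have hedge : ∀ i j, A i j ≠ 0 → v i = v j := by
    intro i j hA
    rcases eq_or_ne i j with rfl | hij
    · rfl
    have hzero : ξ i * A i j * (v i - v j) ^ 2 = 0 := by
      have hrow0 := (Finset.sum_eq_zero_iff_of_nonneg fun i _ =>
        Finset.sum_nonneg fun j _ => hterm i j).1 (by linarith) i (Finset.mem_univ i)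
      exact (Finset.sum_eq_zero_iff_of_nonneg fun j _ => hterm i j).1 hrow0 j (Finset.mem_univ j)
    have hpos : 0 < ξ i * A i j := mul_pos (hξ i) ((hoff i j hij).lt_of_ne' hA)
    simpa [hpos.ne', sub_eq_zero] using hzero
  refine hv (funext fun i => ?_)
  rcases eq_or_ne i₀ i with rfl | hi
  · exact hv₀
  · have hchain : ∀ {a b}, Relation.TransGen (fun p q => A p q ≠ 0) a b → v a = v b := by
      intro a b h
      induction h with
      | single h => exact hedge _ _ h
      | tail _ h ih => exact ih.trans (hedge _ _ h)
    rw [Pi.zero_apply, ← hchain (hirr i₀ i hi), hv₀]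

theorem exists_pinnedForm_le (hoff : ∀ i j, i ≠ j → 0 ≤ A i j) (hrow : ∀ i, ∑ j, A i j = 0)
    (hirr : ∀ i j, i ≠ j → Relation.TransGen (fun p q => A p q ≠ 0) i j)
    {ε : ℝ} (hε : 0 < ε) (hξ : ∀ i, 0 < ξ i) (hleft : ξ ᵥ* A = 0) (i₀ : ι) :
    ∃ lam > 0, ∀ v, pinnedForm A ξ ε i₀ v ≤ -lam * ∑ i, v i ^ 2 := by
  have : Nonempty ι := ⟨i₀⟩
  obtain ⟨lam, hlam, hle⟩ := exists_le_neg_mul_norm_sq (E := EuclideanSpace ℝ ι)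
    ((continuous_pinnedForm ε i₀).comp (PiLp.continuous_ofLp 2 _))
    (fun a v => pinnedForm_smul ε i₀ a v.ofLp)
    (fun v hv => pinnedForm_neg hoff hrow hirr hε hξ hleft i₀ (by simpa using hv))
  refine ⟨lam, hlam, fun v => ?_⟩
  simpa [EuclideanSpace.real_norm_sq_eq] using hle (WithLp.toLp 2 v)

end PinnedForm

theorem exists_tendsto_of_monotoneOn_Ici {f : ℝ → ℝ} {a B : ℝ} (hf : MonotoneOn f (Ici a))
    (hB : ∀ t ≥ a, f t ≤ B) : ∃ l, Tendsto f atTop (𝓝 l) := by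
  have hmono : Monotone fun t => f (max t a) := fun t u htu =>
    hf (le_max_right t a) (le_max_right u a) (max_le_max htu le_rfl)
  have hbdd : BddAbove (range fun t => f (max t a)) :=
    ⟨B, by rintro _ ⟨t, rfl⟩; exact hB _ (le_max_right t a)⟩
  refine ⟨_, (tendsto_atTop_ciSup hmono hbdd).congr' ?_⟩
  filter_upwards [eventually_ge_atTop a] with t ht
  rw [max_eq_left ht]

theorem exists_lt_of_hasDerivAt_le_neg {V V' : ℝ → ℝ} {T δ : ℝ} (hδ : 0 < δ)
    (hV : ∀ t ≥ T, HasDerivAt V (V' t) t) (hV' : ∀ t ≥ T, V' t ≤ -δ) (b : ℝ) :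
    ∃ t ≥ T, V t < b := by
  have hdec := (convex_Ici T).image_sub_le_mul_sub_of_deriv_le
    (fun t ht => (hV t ht).continuousAt.continuousWithinAt)
    (fun t ht => (hV t (interior_subset ht)).differentiableAt.differentiableWithinAt)
    (fun t ht => (hV t (interior_subset ht)).deriv ▸ hV' t (interior_subset ht))
  set t := T + (|V T| + |b| + 1) / δ
  have hTt : T ≤ t := le_add_of_nonneg_right (by positivity)
  refine ⟨t, hTt, ?_⟩
  have := hdec T self_mem_Ici t hTt hTt
  have hδt : δ * (t - T) = |V T| + |b| + 1 := by simp only [t, add_sub_cancel_left]; field_simp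
  linarith [le_abs_self (V T), neg_abs_le b]

theorem lyapunov_tendsto {U c W : ℝ → ℝ} {β c₁ C : ℝ} (hβ : 0 < β) (hC : 0 < C)
    (hU : ∀ t, 0 ≤ U t) (hW : ∀ t, 0 ≤ W t) (hUW : ∀ t, U t ≤ C * W t)
    (hc : MonotoneOn c (Ici 0))
    (hV : ∀ t ≥ 0, ∃ V', HasDerivAt (fun τ => U τ + β * (c τ - c₁) ^ 2) V' t ∧ V' ≤ -W t) :
    Tendsto U atTop (𝓝 0) ∧ ∃ c₀, c 0 ≤ c₀ ∧ Tendsto c atTop (𝓝 c₀) := by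
  set V := fun τ => U τ + β * (c τ - c₁) ^ 2
  choose! V' hV' hV'W using hV
  have hVnn : ∀ t, 0 ≤ V t := fun t => by have := hU t; positivity
  have hVanti : AntitoneOn V (Ici 0) := by
    refine antitoneOn_of_hasDerivWithinAt_nonpos (f' := V') (convex_Ici 0)
      (fun t ht => (hV' t ht).continuousAt.continuousWithinAt)
      (fun t ht => (hV' t (interior_subset ht)).hasDerivWithinAt) fun t ht => ?_
    linarith [hV'W t (interior_subset ht), hW t]
  obtain ⟨c₀, hc₀⟩ : ∃ c₀, Tendsto c atTop (𝓝 c₀) := by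
    refine exists_tendsto_of_monotoneOn_Ici hc (B := c₁ + 1 + V 0 / β) fun t ht => ?_
    have hsq : β * (c t - c₁) ^ 2 ≤ V 0 := by
      linarith [hVanti self_mem_Ici ht ht, hU t]
    have : (c t - c₁) ^ 2 ≤ V 0 / β := by rwa [le_div_iff₀ hβ, mul_comm]
    nlinarith
  obtain ⟨v₀, hv₀⟩ : ∃ v₀, Tendsto V atTop (𝓝 v₀) := by
    obtain ⟨l, hl⟩ := exists_tendsto_of_monotoneOn_Ici (f := fun t => -V t) (a := 0) (B := 0)
      (fun s hs t ht hst => neg_le_neg (hVanti hs ht hst)) fun t _ => by simp [hVnn t]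
    exact ⟨-l, by simpa using hl.neg⟩
  set L := v₀ - β * (c₀ - c₁) ^ 2
  have hUL : Tendsto U atTop (𝓝 L) :=
    (hv₀.sub (((hc₀.sub_const c₁).pow 2).const_mul β)).congr fun t => by simp [V]
  refine ⟨?_, c₀, ge_of_tendsto hc₀
    (eventually_atTop.2 ⟨0, fun t ht => hc self_mem_Ici ht ht⟩), hc₀⟩
  suffices hL : L ≤ 0 by
    rwa [le_antisymm hL (ge_of_tendsto' hUL hU)] at hUL
  by_contra! hL
  -- once `U ≥ L / 2`, `V` decreases at a rate at least `L / (2 C)`, so it would turn negative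
  obtain ⟨T, hT⟩ := eventually_atTop.1 (hUL.eventually (eventually_ge_nhds (half_lt_self hL)))
  have hrate : ∀ t ≥ max T 0, V' t ≤ -(L / (2 * C)) := by
    intro t ht
    have hWt : L / (2 * C) ≤ W t := by
      rw [div_le_iff₀ (by positivity)]
      nlinarith [hUW t, hT t (le_of_max_le_left ht)]
    linarith [hV'W t (le_of_max_le_right ht)]
  obtain ⟨t, -, hVt⟩ := exists_lt_of_hasDerivAt_le_neg (by positivity)
    (fun t ht => hV' t (le_of_max_le_right ht)) hrate 0
  exact (hVt.trans_le (hVnn t)).false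

section Network

variable {ι κ : Type*} [Fintype ι] [Fintype κ]

theorem dotProduct_mul_self_eq (p v : κ → ℝ) : v ⬝ᵥ (p * v) = ∑ k, p k * v k ^ 2 :=
  Finset.sum_congr rfl fun k _ => by simp only [Pi.mul_apply]; ring

theorem dotProduct_mul_self_nonneg {p : κ → ℝ} (hp : ∀ k, 0 ≤ p k) (v : κ → ℝ) :
    0 ≤ v ⬝ᵥ (p * v) := by
  rw [dotProduct_mul_self_eq]
  exact Finset.sum_nonneg fun k _ => mul_nonneg (hp k) (sq_nonneg _)

theorem HasDerivAt.dotProduct_mul_self {u : ℝ → κ → ℝ} {u' : κ → ℝ} {t : ℝ} (p : κ → ℝ)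
    (hu : HasDerivAt u u' t) :
    HasDerivAt (fun τ => u τ ⬝ᵥ (p * u τ)) (2 * (u t ⬝ᵥ (p * u'))) t := by
  have hk : ∀ k,
      HasDerivAt (fun τ => u τ k * (p k * u τ k)) (2 * (u t k * (p k * u' k))) t := by
    intro k
    have huk := hasDerivAt_pi.1 hu k
    exact (huk.mul (huk.const_mul (p k))).congr_deriv (by ring)
  simpa only [dotProduct, Pi.mul_apply, Finset.mul_sum] using HasDerivAt.fun_sum fun k _ => hk k

theorem dotProduct_mul_sub_le_of_quad {p Δ : κ → ℝ} {η : ℝ} (hp : ∀ k, 0 ≤ p k)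
    (hΔ : ∀ k, 0 ≤ Δ k) (hη : 0 ≤ η) {x y fx fy : κ → ℝ}
    (h : (x - y) ⬝ᵥ (fun k => p k * (fx k - Δ k * x k - fy k + Δ k * y k))
      ≤ -η * ((x - y) ⬝ᵥ (x - y))) :
    (x - y) ⬝ᵥ (p * (fx - fy)) ≤ (∑ k, Δ k) * ((x - y) ⬝ᵥ (p * (x - y))) := by
  have hsplit : (x - y) ⬝ᵥ (fun k => p k * (fx k - Δ k * x k - fy k + Δ k * y k))
      = (x - y) ⬝ᵥ (p * (fx - fy)) - ∑ k, Δ k * (p k * (x k - y k) ^ 2) := by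
    simp only [dotProduct, Pi.mul_apply, Pi.sub_apply, ← Finset.sum_sub_distrib]
    exact Finset.sum_congr rfl fun k _ => by ring
  have hΔle :
      ∑ k, Δ k * (p k * (x k - y k) ^ 2) ≤ (∑ k, Δ k) * ((x - y) ⬝ᵥ (p * (x - y))) := by
    rw [dotProduct_mul_self_eq, Finset.mul_sum]
    exact Finset.sum_le_sum fun k _ => mul_le_mul_of_nonneg_right
      (Finset.single_le_sum (fun j _ => hΔ j) (Finset.mem_univ k)) (by have := hp k; positivity)
  have hη' : 0 ≤ η * ((x - y) ⬝ᵥ (x - y)) :=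
    mul_nonneg hη (Finset.sum_nonneg fun k _ => mul_self_nonneg ((x - y) k))
  linarith

theorem sum_mul_dotProduct_coupling [DecidableEq ι] (A : Matrix ι ι ℝ) (ξ : ι → ℝ) (ε : ℝ)
    (i₀ : ι) (p : κ → ℝ) (g : ι → κ → ℝ) (c : ℝ) :
    ∑ i, ξ i * (g i ⬝ᵥ (p * (c • ∑ j, A i j • g j - (if i = i₀ then c * ε else 0) • g i)))
      = c * ∑ k, p k * pinnedForm A ξ ε i₀ fun i => g i k := by
  simp only [dotProduct, Finset.mul_sum]
  rw [Finset.sum_comm]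
  refine Finset.sum_congr rfl fun k _ => ?_
  have hpin : ∀ i, ξ i * (g i k * (p k * ((if i = i₀ then c * ε else 0) • g i) k))
      = if i = i₀ then c * p k * (ε * ξ i₀ * g i₀ k ^ 2) else 0 := by
    intro i
    split_ifs with h
    · subst h; simp only [Pi.smul_apply, smul_eq_mul]; ring
    · simp
  simp only [pinnedForm, mulVec, dotProduct, Pi.mul_apply, Pi.sub_apply, mul_sub,
    Finset.sum_sub_distrib, hpin, Finset.sum_ite_eq', Finset.mem_univ, if_true]
  congr 1
  · simp only [Pi.smul_apply, Finset.sum_apply, smul_eq_mul, Finset.mul_sum]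
    exact Finset.sum_congr rfl fun i _ => Finset.sum_congr rfl fun j _ => by ring
  · ring

theorem sum_mul_le_sum_mul_sum {w u : ι → ℝ} (hw : ∀ i, 0 ≤ w i) (hu : ∀ i, 0 ≤ u i) :
    ∑ i, w i * u i ≤ (∑ i, w i) * ∑ i, u i := by
  rw [Finset.sum_mul_sum]
  exact Finset.sum_le_sum fun i _ => Finset.single_le_sum (f := fun j => w i * u j)
    (fun j _ => mul_nonneg (hw i) (hu j)) (Finset.mem_univ i)

theorem lyapunov_deriv_le [DecidableEq ι] {A : Matrix ι ι ℝ} {ξ : ι → ℝ} {ε : ℝ} {i₀ : ι}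
    {p : κ → ℝ} {lam D c c₁ α : ℝ} (hξ : ∀ i, 0 ≤ ξ i) (hp : ∀ k, 0 ≤ p k) (hD : 0 ≤ D)
    (hα : α ≠ 0) (hc : 0 ≤ c) (hQ : ∀ v, pinnedForm A ξ ε i₀ v ≤ -lam * ∑ i, v i ^ 2)
    (hc₁ : 2 * lam * c₁ = 2 * D * ∑ i, ξ i + 1) (g F : ι → κ → ℝ)
    (hF : ∀ i, g i ⬝ᵥ (p * F i) ≤ D * (g i ⬝ᵥ (p * g i))) :
    ∑ i, ξ i * (2 * (g i ⬝ᵥ (p * (F i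
        + (c • ∑ j, A i j • g j - (if i = i₀ then c * ε else 0) • g i)))))
      + 2 * lam / α * (2 * (c - c₁) * (α / 2 * ∑ i, g i ⬝ᵥ (p * g i)))
      ≤ -∑ i, g i ⬝ᵥ (p * g i) := by
  set W := ∑ i, g i ⬝ᵥ (p * g i)
  have hW : 0 ≤ W := Finset.sum_nonneg fun i _ => dotProduct_mul_self_nonneg hp (g i)
  have hsplit : ∑ i, ξ i * (2 * (g i ⬝ᵥ (p * (F i
        + (c • ∑ j, A i j • g j - (if i = i₀ then c * ε else 0) • g i)))))
      = 2 * ∑ i, ξ i * (g i ⬝ᵥ (p * F i)) + 2 * ∑ i, ξ i * (g i ⬝ᵥ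
        (p * (c • ∑ j, A i j • g j - (if i = i₀ then c * ε else 0) • g i))) := by
    simp only [mul_add, dotProduct_add, Finset.mul_sum, ← Finset.sum_add_distrib]
    exact Finset.sum_congr rfl fun i _ => by ring
  have hforce : ∑ i, ξ i * (g i ⬝ᵥ (p * F i)) ≤ D * (∑ i, ξ i) * W := by
    calc ∑ i, ξ i * (g i ⬝ᵥ (p * F i)) ≤ ∑ i, ξ i * (D * (g i ⬝ᵥ (p * g i))) :=
          Finset.sum_le_sum fun i _ => mul_le_mul_of_nonneg_left (hF i) (hξ i)
      _ ≤ (∑ i, ξ i) * ∑ i, D * (g i ⬝ᵥ (p * g i)) := sum_mul_le_sum_mul_sum hξ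
          fun i => mul_nonneg hD (dotProduct_mul_self_nonneg hp (g i))
      _ = D * (∑ i, ξ i) * W := by rw [← Finset.mul_sum]; ring
  have hcoupling : ∑ i, ξ i * (g i ⬝ᵥ
      (p * (c • ∑ j, A i j • g j - (if i = i₀ then c * ε else 0) • g i))) ≤ -(c * lam * W) := by
    have hWk : W = ∑ k, p k * ∑ i, g i k ^ 2 := by
      simp only [W, dotProduct_mul_self_eq, Finset.mul_sum]
      exact Finset.sum_comm
    rw [sum_mul_dotProduct_coupling, hWk, Finset.mul_sum, Finset.mul_sum,
      ← Finset.sum_neg_distrib]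
    exact Finset.sum_le_sum fun k _ => by
      nlinarith [mul_le_mul_of_nonneg_left (hQ fun i => g i k) (hp k)]
  have hcstar : 2 * lam / α * (2 * (c - c₁) * (α / 2 * W))
      = 2 * lam * c * W - (2 * D * (∑ i, ξ i) + 1) * W := by
    rw [← hc₁]; field_simp
  rw [hsplit, hcstar]
  nlinarith

theorem exists_hasDerivAt_lyapunov_le [DecidableEq ι] {A : Matrix ι ι ℝ} {ξ : ι → ℝ} {ε : ℝ}
    {i₀ : ι} {p : κ → ℝ} {lam D c₁ α t : ℝ} {c : ℝ → ℝ} {e : ι → ℝ → κ → ℝ} {F : ι → κ → ℝ}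
    (hξ : ∀ i, 0 ≤ ξ i) (hp : ∀ k, 0 ≤ p k) (hD : 0 ≤ D) (hα : α ≠ 0)
    (hQ : ∀ v, pinnedForm A ξ ε i₀ v ≤ -lam * ∑ i, v i ^ 2)
    (hc₁ : 2 * lam * c₁ = 2 * D * ∑ i, ξ i + 1) (hct : 0 ≤ c t)
    (he : ∀ i, HasDerivAt (e i)
      (F i + (c t • ∑ j, A i j • e j t - (if i = i₀ then c t * ε else 0) • e i t)) t)
    (hc : HasDerivAt c (α / 2 * ∑ i, e i t ⬝ᵥ (p * e i t)) t)
    (hF : ∀ i, e i t ⬝ᵥ (p * F i) ≤ D * (e i t ⬝ᵥ (p * e i t))) :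
    ∃ V', HasDerivAt (fun τ => ∑ i, ξ i * (e i τ ⬝ᵥ (p * e i τ)) + 2 * lam / α * (c τ - c₁) ^ 2)
      V' t ∧ V' ≤ -∑ i, e i t ⬝ᵥ (p * e i t) := by
  refine ⟨_, (HasDerivAt.fun_sum fun i _ => ((he i).dotProduct_mul_self p).const_mul (ξ i)).add
    (((hc.sub_const c₁).pow 2).const_mul _), ?_⟩
  convert lyapunov_deriv_le hξ hp hD hα hct hQ hc₁ (fun i => e i t) F hF using 3
  norm_num

theorem HasDerivAt.sub_of_sum_eq_zero {E : Type*} [NormedAddCommGroup E] [NormedSpace ℝ E]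
    {f : E → ℝ → E} {y s : ℝ → E} {x : ι → E} {a : ι → ℝ} {c d t : ℝ} (ha : ∑ j, a j = 0)
    (hy : HasDerivAt y (f (y t) t + c • ∑ j, a j • x j - d • (y t - s t)) t)
    (hs : HasDerivAt s (f (s t) t) t) :
    HasDerivAt (fun τ => y τ - s τ)
      (f (y t) t - f (s t) t + (c • ∑ j, a j • (x j - s t) - d • (y t - s t))) t := by
  have hshift : ∑ j, a j • (x j - s t) = ∑ j, a j • x j := by
    simp [smul_sub, Finset.sum_sub_distrib, ← Finset.sum_smul, ha]
  refine (hy.sub hs).congr_deriv ?_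
  rw [hshift]
  abel

theorem tendsto_apply_of_sum_mul_tendsto_zero {α : Type*} {l : Filter α} {w : ι → ℝ}
    {u : α → ι → ℝ} (hw : ∀ i, 0 < w i) (hu : ∀ a i, 0 ≤ u a i)
    (h : Tendsto (fun a => ∑ i, w i * u a i) l (𝓝 0)) (i : ι) :
    Tendsto (fun a => u a i) l (𝓝 0) := by
  have hle : ∀ a, u a i ≤ (∑ j, w j * u a j) / w i := fun a => by
    rw [le_div_iff₀ (hw i), mul_comm]
    exact Finset.single_le_sum (fun j _ => mul_nonneg (hw j).le (hu a j)) (Finset.mem_univ i)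
  exact tendsto_of_tendsto_of_tendsto_of_le_of_le tendsto_const_nhds
    (by simpa using h.div_const (w i)) (hu · i) hle

theorem tendsto_zero_of_dotProduct_mul_self {α : Type*} {l : Filter α} {p : κ → ℝ}
    {u : α → κ → ℝ} (hp : ∀ k, 0 < p k) (h : Tendsto (fun a => u a ⬝ᵥ (p * u a)) l (𝓝 0)) :
    Tendsto u l (𝓝 0) := by
  simp only [dotProduct_mul_self_eq] at h
  refine tendsto_pi_nhds.2 fun k => ?_
  have hsq := tendsto_apply_of_sum_mul_tendsto_zero hp (fun a k => sq_nonneg (u a k)) h k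
  have habs := (Real.continuous_sqrt.tendsto 0).comp hsq
  simp only [Function.comp_def, Real.sqrt_sq_eq_abs, Real.sqrt_zero] at habs
  exact tendsto_zero_iff_abs_tendsto_zero _ |>.2 habs

end Network

/-- Theorem 5: adaptive adjustment of the coupling strength pins the network:
the states synchronize to `s(t)` and the adaptive coupling strength `c(t)`
converges to a finite nonnegative limit. -/
theorem stmt_8 (m n : ℕ) (hm : 2 ≤ m)
    (A : Matrix (Fin m) (Fin m) ℝ)
    (hoff : ∀ i j : Fin m, i ≠ j → 0 ≤ A i j)
    (hrow : ∀ i : Fin m, ∑ j, A i j = 0)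
    (hirr : ∀ i j : Fin m, i ≠ j → Relation.TransGen (fun p q => A p q ≠ 0) i j)
    (ε : ℝ) (hε : 0 < ε)
    (ξ : Fin m → ℝ) (hξ : ∀ i, 0 < ξ i) (hleft : ξ ᵥ* A = 0)
    (p Δ : Fin n → ℝ) (hp : ∀ k, 0 < p k) (hΔ : ∀ k, 0 < Δ k)
    (η : ℝ) (hη : 0 < η)
    (f : (Fin n → ℝ) → ℝ → (Fin n → ℝ))
    (hcond : ∀ t : ℝ, 0 ≤ t → ∀ x y : Fin n → ℝ,
      (x - y) ⬝ᵥ (fun k => p k * (f x t k - Δ k * x k - f y t k + Δ k * y k))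
        ≤ -η * ((x - y) ⬝ᵥ (x - y)))
    (α : ℝ) (hα : 0 < α)
    (s : ℝ → Fin n → ℝ) (hs : ∀ t : ℝ, 0 ≤ t → HasDerivAt s (f (s t) t) t)
    (x : Fin m → ℝ → Fin n → ℝ) (cc : ℝ → ℝ) (hcc0 : 0 ≤ cc 0)
    (hx1 : ∀ t : ℝ, 0 ≤ t → HasDerivAt (x ⟨0, by omega⟩)
      (f (x ⟨0, by omega⟩ t) t + cc t • (∑ j, A ⟨0, by omega⟩ j • x j t)
        - (cc t * ε) • (x ⟨0, by omega⟩ t - s t)) t)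
    (hxi : ∀ i : Fin m, i ≠ (⟨0, by omega⟩ : Fin m) → ∀ t : ℝ, 0 ≤ t →
      HasDerivAt (x i) (f (x i t) t + cc t • (∑ j, A i j • x j t)) t)
    (hccder : ∀ t : ℝ, 0 ≤ t → HasDerivAt cc
      (α / 2 * ∑ i : Fin m, (x i t - s t) ⬝ᵥ (fun k => p k * (x i t - s t) k)) t) :
    (∀ i : Fin m, Tendsto (fun t : ℝ => ‖x i t - s t‖) atTop (nhds 0)) ∧
      ∃ c₀ : ℝ, 0 ≤ c₀ ∧ Tendsto cc atTop (nhds c₀) := by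
  set i₀ : Fin m := ⟨0, by omega⟩
  set e := fun i t => x i t - s t
  have he : ∀ i, ∀ t ≥ 0, HasDerivAt (e i) (f (x i t) t - f (s t) t
      + (cc t • ∑ j, A i j • e j t - (if i = i₀ then cc t * ε else 0) • e i t)) t := by
    intro i t ht
    refine HasDerivAt.sub_of_sum_eq_zero (hrow i) ?_ (hs t ht)
    by_cases hi : i = i₀
    · subst hi; simpa using hx1 t ht
    · simpa [hi] using hxi i hi t ht
  have hw : ∀ i t, 0 ≤ e i t ⬝ᵥ (p * e i t) := fun i t =>
    dotProduct_mul_self_nonneg (fun k => (hp k).le) (e i t)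
  have hc' : ∀ t ≥ 0, HasDerivAt cc (α / 2 * ∑ i, e i t ⬝ᵥ (p * e i t)) t := hccder
  have hcc : MonotoneOn cc (Ici 0) :=
    monotoneOn_of_hasDerivWithinAt_nonneg (convex_Ici 0)
      (fun t ht => (hc' t ht).continuousAt.continuousWithinAt)
      (fun t ht => (hc' t (interior_subset ht)).hasDerivWithinAt) fun t _ =>
        mul_nonneg (by positivity) (Finset.sum_nonneg fun i _ => hw i t)
  obtain ⟨lam, hlam, hQ⟩ := exists_pinnedForm_le hoff hrow hirr hε hξ hleft i₀
  obtain ⟨c₁, hc₁⟩ : ∃ c₁, 2 * lam * c₁ = 2 * (∑ k, Δ k) * ∑ i, ξ i + 1 :=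
    ⟨_, mul_div_cancel₀ _ (by positivity)⟩
  have hV := fun t (ht : t ≥ 0) => exists_hasDerivAt_lyapunov_le (fun i => (hξ i).le)
    (fun k => (hp k).le) (Finset.sum_nonneg fun k _ => (hΔ k).le) hα.ne' hQ
    hc₁ (hcc0.trans (hcc self_mem_Ici ht ht)) (he · t ht) (hc' t ht)
    fun i => dotProduct_mul_sub_le_of_quad (fun k => (hp k).le) (fun k => (hΔ k).le) hη.le
      (hcond t ht (x i t) (s t))
  obtain ⟨hU, c₀, hc₀, hlim⟩ := lyapunov_tendsto (by positivity)
    (Finset.sum_pos (fun i _ => hξ i) ⟨i₀, Finset.mem_univ _⟩)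
    (fun t => Finset.sum_nonneg fun i _ => mul_nonneg (hξ i).le (hw i t))
    (fun t => Finset.sum_nonneg fun i _ => hw i t)
    (fun t => sum_mul_le_sum_mul_sum (fun i => (hξ i).le) fun i => hw i t) hcc hV
  refine ⟨fun i => ?_, c₀, hcc0.trans hc₀, hlim⟩
  exact tendsto_zero_iff_norm_tendsto_zero.1 (tendsto_zero_of_dotProduct_mul_self hp
    (tendsto_apply_of_sum_mul_tendsto_zero hξ (fun t i => hw i t) hU i))
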